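/- For real numbers λ₁, λ₂, λ₃, pairwise distinct, each of absolute value strictly less than 1, and a nonnegative integer S, the triple sum ∑_{j₁=-∞}^{∞} ∑_{j₂=-∞}^{∞} λ₁^{|j₁|} λ₂^{|j₂|} λ₃^{|S-j₁-j₂|} equals λ₁^{S+2}(1-λ₂²)(1-λ₃²)/((λ₁-λ₂)(λ₁-λ₃)(1-λ₁λ₂)(1-λ₁λ₃)) + λ₂^{S+2}(1-λ₁²)(1-λ₃²)/((λ₂-λ₁)(λ₂-λ₃)(1-λ₂λ₁)(1-λ₂λ₃)) + λ₃^{S+2}(1-λ₁²)(1-λ₂²)/((λ₃-λ₁)(λ₃-λ₂)(1-λ₃λ₁)(1-λ₃λ₂)). -/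

import Mathlib

/-! Write `g_a j = a ^ |j|`, so that the sum is the convolution `(g_λ₁ * g_λ₂ * g_λ₃) S`.
Summing geometric series over `j < 0`, `0 ≤ j ≤ m` and `j > m` gives
`g_a * g_b = c a b • g_a + c b a • g_b` with `c a b = a (1 - b²) / ((a - b) (1 - a b))`
(`geomConvCoeff`). Applying this twice expresses the sum as a combination of the `λᵢ ^ S`.
The coefficient of `λ₁ ^ S` comes out as `c λ₂ λ₃ c λ₁ λ₂ + c λ₃ λ₂ c λ₁ λ₃`, which equals
`c λ₁ λ₂ c λ₁ λ₃` (associativity of the convolution, read off on the `g_λ₁` component), and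
`c a b c a c` is exactly the coefficient in the closed form. -/

open Finset

noncomputable def geomConvCoeff {K : Type*} [Field K] (a b : K) : K :=
  a * (1 - b ^ 2) / ((a - b) * (1 - a * b))

section TwoSidedGeometric

variable {𝕜 : Type*} [NormedField 𝕜]

theorem norm_mul_lt_one {a b : 𝕜} (ha : ‖a‖ < 1) (hb : ‖b‖ < 1) : ‖a * b‖ < 1 := by
  rw [norm_mul]; exact mul_lt_one_of_nonneg_of_lt_one_left (norm_nonneg a) ha hb.le

theorem one_sub_mul_ne_zero_of_norm_lt_one {a b : 𝕜} (ha : ‖a‖ < 1) (hb : ‖b‖ < 1) :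
    1 - a * b ≠ 0 := by
  refine sub_ne_zero.mpr fun h => ?_
  simpa [← h] using norm_mul_lt_one ha hb

theorem summable_pow_natAbs {r : ℝ} (hr₀ : 0 ≤ r) (hr : r < 1) :
    Summable fun j : ℤ => r ^ j.natAbs := by
  have hg := summable_geometric_of_lt_one hr₀ hr
  exact .of_nat_of_neg (hg.congr fun n => by simp) (hg.congr fun n => by simp)

theorem summable_pow_natAbs_mul_pow_natAbs_mul_pow [CompleteSpace 𝕜] {a b c : 𝕜}
    (ha : ‖a‖ < 1) (hb : ‖b‖ < 1) (hc : ‖c‖ ≤ 1) (e : ℤ × ℤ → ℕ) :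
    Summable fun p : ℤ × ℤ => a ^ p.1.natAbs * b ^ p.2.natAbs * c ^ e p := by
  have hprod := (summable_pow_natAbs (norm_nonneg a) ha).mul_of_nonneg
    (summable_pow_natAbs (norm_nonneg b) hb) (fun _ => by positivity) (fun _ => by positivity)
  refine .of_norm_bounded hprod fun p => ?_
  simp only [norm_mul, norm_pow]
  exact mul_le_of_le_one_right (by positivity) (pow_le_one₀ (norm_nonneg c) hc)

variable {a b : 𝕜}

theorem hasSum_pow_natAbs_mul_pow_natAbs_natCast_sub (ha : ‖a‖ < 1) (hb : ‖b‖ < 1) (hab : a ≠ b)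
    (n : ℕ) :
    HasSum (fun j : ℤ => a ^ j.natAbs * b ^ ((n : ℤ) - j).natAbs)
      (geomConvCoeff a b * a ^ n + geomConvCoeff b a * b ^ n) := by
  have hsplit : HasSum (fun j : ℤ => a ^ j.natAbs * b ^ ((n : ℤ) - j).natAbs)
      ((a ^ (n + 1) * b * (1 - a * b)⁻¹ + ∑ i ∈ range (n + 1), a ^ i * b ^ (n - i)) +
        a * b ^ (n + 1) * (1 - a * b)⁻¹) := by
    have hgeo := hasSum_geometric_of_norm_lt_one (norm_mul_lt_one ha hb)
    refine .of_nat_of_neg_add_one ?_ ?_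
    · have hfinite : ∑ i ∈ range (n + 1), a ^ (i : ℤ).natAbs * b ^ ((n : ℤ) - i).natAbs =
          ∑ i ∈ range (n + 1), a ^ i * b ^ (n - i) := by
        refine sum_congr rfl fun i hi => ?_
        have : i ≤ n := Nat.lt_succ_iff.mp (mem_range.mp hi)
        rw [Int.natAbs_natCast, show ((n : ℤ) - i).natAbs = n - i by omega]
      rw [← hfinite]
      refine (hasSum_nat_add_iff (n + 1)).mp ?_
      refine (hgeo.mul_left (a ^ (n + 1) * b)).congr_fun fun k => ?_
      rw [show ((k + (n + 1) : ℕ) : ℤ).natAbs = k + (n + 1) by omega,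
        show ((n : ℤ) - ((k + (n + 1) : ℕ) : ℤ)).natAbs = k + 1 by omega]
      ring
    · refine (hgeo.mul_left (a * b ^ (n + 1))).congr_fun fun k => ?_
      rw [show (-((k : ℤ) + 1)).natAbs = k + 1 by omega,
        show ((n : ℤ) - -((k : ℤ) + 1)).natAbs = n + (k + 1) by omega]
      ring
  convert hsplit using 1
  have hfinite := (Commute.all a b).geom_sum₂ hab (n + 1)
  rw [Nat.add_sub_cancel] at hfinite
  have hab' : a - b ≠ 0 := sub_ne_zero.mpr hab
  have hba' : b - a ≠ 0 := sub_ne_zero.mpr hab.symm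
  have h₁ := one_sub_mul_ne_zero_of_norm_lt_one ha hb
  have h₂ := one_sub_mul_ne_zero_of_norm_lt_one hb ha
  rw [hfinite, geomConvCoeff, geomConvCoeff]
  field_simp
  ring

theorem hasSum_pow_natAbs_mul_pow_natAbs_sub (ha : ‖a‖ < 1) (hb : ‖b‖ < 1) (hab : a ≠ b)
    (m : ℤ) :
    HasSum (fun j : ℤ => a ^ j.natAbs * b ^ (m - j).natAbs)
      (geomConvCoeff a b * a ^ m.natAbs + geomConvCoeff b a * b ^ m.natAbs) := by
  obtain ⟨n, rfl | rfl⟩ := Int.eq_nat_or_neg m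
  · exact hasSum_pow_natAbs_mul_pow_natAbs_natCast_sub ha hb hab n
  · rw [← (Equiv.neg ℤ).hasSum_iff]
    convert hasSum_pow_natAbs_mul_pow_natAbs_natCast_sub ha hb hab n using 1
    · ext j
      simp only [Function.comp_apply, Equiv.neg_apply, Int.natAbs_neg]
      rw [show (-(n : ℤ) - -j) = -((n : ℤ) - j) by ring, Int.natAbs_neg]
    · simp

end TwoSidedGeometric

theorem geomConvCoeff_mul_geomConvCoeff {K : Type*} [Field K] (a b c : K) :
    geomConvCoeff a b * geomConvCoeff a c =
      a ^ 2 * (1 - b ^ 2) * (1 - c ^ 2) / ((a - b) * (a - c) * (1 - a * b) * (1 - a * c)) := by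
  rw [geomConvCoeff, geomConvCoeff, div_mul_div_comm]
  ring

theorem geomConvCoeff_mul_add_geomConvCoeff_mul {K : Type*} [Field K] {a b c : K}
    (hab : a ≠ b) (hac : a ≠ c) (hbc : b ≠ c) (hab' : 1 - a * b ≠ 0) (hac' : 1 - a * c ≠ 0)
    (hbc' : 1 - b * c ≠ 0) :
    geomConvCoeff a b * geomConvCoeff b c + geomConvCoeff a c * geomConvCoeff c b =
      geomConvCoeff a b * geomConvCoeff a c := by
  have := sub_ne_zero.mpr hab
  have := sub_ne_zero.mpr hac
  have := sub_ne_zero.mpr hbc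
  have := sub_ne_zero.mpr hbc.symm
  have : 1 - c * b ≠ 0 := by rwa [mul_comm]
  simp only [geomConvCoeff]
  field_simp
  ring

theorem stmt_6 (l1 l2 l3 : ℝ) (h1 : |l1| < 1) (h2 : |l2| < 1) (h3 : |l3| < 1)
    (h12 : l1 ≠ l2) (h13 : l1 ≠ l3) (h23 : l2 ≠ l3) (S : ℕ) :
    ∑' p : ℤ × ℤ, l1 ^ p.1.natAbs * l2 ^ p.2.natAbs * l3 ^ ((S : ℤ) - p.1 - p.2).natAbs =
      l1 ^ (S + 2) * (1 - l2 ^ 2) * (1 - l3 ^ 2) /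
        ((l1 - l2) * (l1 - l3) * (1 - l1 * l2) * (1 - l1 * l3)) +
      l2 ^ (S + 2) * (1 - l1 ^ 2) * (1 - l3 ^ 2) /
        ((l2 - l1) * (l2 - l3) * (1 - l2 * l1) * (1 - l2 * l3)) +
      l3 ^ (S + 2) * (1 - l1 ^ 2) * (1 - l2 ^ 2) /
        ((l3 - l1) * (l3 - l2) * (1 - l3 * l1) * (1 - l3 * l2)) := by
  rw [← Real.norm_eq_abs] at h1 h2 h3
  have hinner (j : ℤ) := ((hasSum_pow_natAbs_mul_pow_natAbs_sub h2 h3 h23 ((S : ℤ) - j)).mul_left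
    (l1 ^ j.natAbs)).congr_fun fun k =>
      (mul_assoc (l1 ^ j.natAbs) (l2 ^ k.natAbs) (l3 ^ ((S : ℤ) - j - k).natAbs))
  have houter := (((hasSum_pow_natAbs_mul_pow_natAbs_sub h1 h2 h12 S).mul_left
    (geomConvCoeff l2 l3)).add
    ((hasSum_pow_natAbs_mul_pow_natAbs_sub h1 h3 h13 S).mul_left (geomConvCoeff l3 l2))).congr_fun
    fun j : ℤ => show l1 ^ j.natAbs * (geomConvCoeff l2 l3 * l2 ^ ((S : ℤ) - j).natAbs +
      geomConvCoeff l3 l2 * l3 ^ ((S : ℤ) - j).natAbs) = _ by ring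
  have hsum := summable_pow_natAbs_mul_pow_natAbs_mul_pow h1 h2 h3.le
    fun p : ℤ × ℤ => ((S : ℤ) - p.1 - p.2).natAbs
  rw [(hsum.hasSum.prod_fiberwise hinner).unique houter, Int.natAbs_natCast]
  calc _ = geomConvCoeff l1 l2 * geomConvCoeff l1 l3 * l1 ^ S
          + geomConvCoeff l2 l1 * geomConvCoeff l2 l3 * l2 ^ S
          + geomConvCoeff l3 l1 * geomConvCoeff l3 l2 * l3 ^ S := by
        rw [← geomConvCoeff_mul_add_geomConvCoeff_mul h12 h13 h23
          (one_sub_mul_ne_zero_of_norm_lt_one h1 h2) (one_sub_mul_ne_zero_of_norm_lt_one h1 h3)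
          (one_sub_mul_ne_zero_of_norm_lt_one h2 h3)]
        ring
    _ = _ := by simp only [geomConvCoeff_mul_geomConvCoeff]; ring
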